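/- One step of gradient descent on the variational objective L(θ_t) = ∑_i E_{N(θ_t,I)}[ℓ_i(θ)] + KL(N(θ_t,I)‖N(0,I)) for logistic regression is equal to one step of gradient descent on the regularized empirical risk in which each label y_i is replaced by the noisy label y_i + ε_{i|t}, where ε_{i|t} = σ(φ_iᵀθ_t) - E_{N(θ_t,I)}[σ(φ_iᵀθ)]. -/

import Mathlib

open MeasureTheory Real
open scoped BigOperators

noncomputable def _root_.sigmoid (f : ℝ) : ℝ := 1 / (1 + Real.exp (-f))

/-- Density of the Gaussian `N(m, I)` on `ℝᵖ`. -/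
noncomputable def gaussDensity {p : ℕ} (m θ : EuclideanSpace ℝ (Fin p)) : ℝ :=
  (2 * π) ^ (-(p : ℝ) / 2) * Real.exp (-‖θ - m‖ ^ 2 / 2)

/-- The Gaussian measure `N(m, I)` on `ℝᵖ`. -/
noncomputable def gaussMeasure {p : ℕ} (m : EuclideanSpace ℝ (Fin p)) :
    Measure (EuclideanSpace ℝ (Fin p)) :=
  volume.withDensity fun θ => ENNReal.ofReal (gaussDensity m θ)

/-- KL divergence `KL(N(m,I) ‖ N(0,I))`. -/
noncomputable def klGauss {p : ℕ} (m : EuclideanSpace ℝ (Fin p)) : ℝ :=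
  ∫ θ, Real.log (gaussDensity m θ / gaussDensity 0 θ) ∂(gaussMeasure m)

open scoped NNReal ENNReal

section Aux

variable {p : ℕ}
local notation "E" => EuclideanSpace ℝ (Fin p)

lemma gaussDensity_pos (m θ : E) : 0 < gaussDensity m θ := by
  unfold gaussDensity; positivity

lemma continuous_gaussDensity (m : E) : Continuous (gaussDensity m) := by
  unfold gaussDensity; fun_prop

lemma gaussDensity_sub (m θ : E) : gaussDensity m θ = gaussDensity 0 (θ - m) := by
  simp [gaussDensity]

/-- integral against gaussMeasure as a weighted Lebesgue integral -/
lemma integral_gaussMeasure (m : E) (g : E → ℝ) :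
    ∫ θ, g θ ∂(gaussMeasure m) = ∫ θ, gaussDensity m θ * g θ := by
  have hmeas : Measurable fun θ : E => (gaussDensity m θ).toNNReal :=
    (continuous_gaussDensity m).measurable.real_toNNReal
  have : ∫ θ, g θ ∂(gaussMeasure m)
      = ∫ θ, ((gaussDensity m θ).toNNReal : ℝ≥0) • g θ := by
    rw [gaussMeasure]
    exact integral_withDensity_eq_integral_smul hmeas g
  rw [this]
  congr 1 with θ
  simp [NNReal.smul_def, Real.coe_toNNReal _ (gaussDensity_pos m θ).le]

/-- translation: integral against `N(m,I)` as integral against `N(0,I)` -/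
lemma integral_gaussMeasure_shift (m : E) (g : E → ℝ) :
    ∫ θ, g θ ∂(gaussMeasure m) = ∫ θ, g (θ + m) ∂(gaussMeasure (0 : E)) := by
  rw [integral_gaussMeasure, integral_gaussMeasure]
  have : ∀ θ : E, gaussDensity m θ * g θ
      = (fun θ : E => gaussDensity 0 θ * g (θ + m)) (θ - m) := by
    intro θ; simp [gaussDensity_sub m θ]
  simp_rw [this]
  exact integral_sub_right_eq_self (fun θ : E => gaussDensity 0 θ * g (θ + m)) m

end Aux
section Aux2
variable {p : ℕ}
local notation "E" => EuclideanSpace ℝ (Fin p)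

lemma integrable_rexp_neg_mul_sq_norm {b : ℝ} (hb : 0 < b) :
    Integrable (fun v : E => rexp (-b * ‖v‖ ^ 2)) := by
  have h := (GaussianFourier.integrable_cexp_neg_mul_sq_norm_add
    (V := E) (b := (b : ℂ)) (by simpa using hb) 0 0).norm
  simpa [Complex.norm_exp, ← Complex.ofReal_pow, neg_mul] using h

lemma gaussDensity_zero_eq (θ : E) : gaussDensity (0 : E) θ
    = (2 * π) ^ (-(p : ℝ) / 2) * rexp (-(1/2 : ℝ) * ‖θ‖ ^ 2) := by
  unfold gaussDensity; rw [sub_zero]; congr 1; ring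

lemma integrable_gaussDensity_zero : Integrable (fun θ : E => gaussDensity 0 θ) := by
  simp_rw [gaussDensity_zero_eq]
  exact (integrable_rexp_neg_mul_sq_norm (by norm_num)).const_mul _

lemma integral_gaussDensity_zero :
    ∫ θ : E, gaussDensity (0 : E) θ = 1 := by
  simp_rw [gaussDensity_zero_eq]
  rw [integral_const_mul,
    GaussianFourier.integral_rexp_neg_mul_sq_norm (by norm_num : (0:ℝ) < 1/2)]
  have h2 : ((π : ℝ) / (1/2)) = 2 * π := by ring
  rw [h2, finrank_euclideanSpace_fin, ← Real.rpow_add (by positivity),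
    show (-(p:ℝ)/2 + (p:ℝ)/2) = 0 by ring, Real.rpow_zero]

instance : IsProbabilityMeasure (gaussMeasure (0 : E)) := by
  constructor
  rw [gaussMeasure, withDensity_apply _ MeasurableSet.univ, setLIntegral_univ,
    ← ofReal_integral_eq_lintegral_ofReal integrable_gaussDensity_zero
      (Filter.Eventually.of_forall fun θ => (gaussDensity_pos 0 θ).le),
    integral_gaussDensity_zero]
  simp

end Aux2
section Aux3
variable {p : ℕ}
local notation "E" => EuclideanSpace ℝ (Fin p)

lemma integrable_gauss_iff (g : E → ℝ) :
    Integrable g (gaussMeasure (0 : E))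
      ↔ Integrable (fun θ : E => g θ * gaussDensity 0 θ) := by
  rw [gaussMeasure, integrable_withDensity_iff
    ((continuous_gaussDensity (0:E)).measurable.ennreal_ofReal)
    (Filter.Eventually.of_forall fun θ => ENNReal.ofReal_lt_top)]
  simp_rw [ENNReal.toReal_ofReal (gaussDensity_pos 0 _).le]

lemma integrable_norm_gauss : Integrable (fun θ : E => ‖θ‖) (gaussMeasure (0 : E)) := by
  rw [integrable_gauss_iff]
  have hC : (0:ℝ) ≤ (2 * π) ^ (-(p : ℝ) / 2) := by positivity
  apply Integrable.mono
    ((integrable_rexp_neg_mul_sq_norm (by norm_num : (0:ℝ) < 1/4)).const_mul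
      ((2 * π) ^ (-(p : ℝ) / 2)))
    (continuous_norm.mul (continuous_gaussDensity (0:E))).aestronglyMeasurable
  refine Filter.Eventually.of_forall fun θ => ?_
  simp only [Pi.mul_apply]
  rw [gaussDensity_zero_eq]
  have hx : (0:ℝ) ≤ ‖θ‖ := norm_nonneg θ
  have h1 : ‖θ‖ ≤ rexp (‖θ‖^2/4) := by
    nlinarith [Real.add_one_le_exp (‖θ‖^2/4), sq_nonneg (‖θ‖ - 2)]
  have h2 : rexp (‖θ‖^2/4) * rexp (-(1/2:ℝ) * ‖θ‖^2) = rexp (-(1/4:ℝ) * ‖θ‖^2) := by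
    rw [← Real.exp_add]; ring_nf
  have h3 : ‖θ‖ * ((2 * π) ^ (-(p : ℝ) / 2) * rexp (-(1/2:ℝ) * ‖θ‖^2))
      ≤ rexp (‖θ‖^2/4) * ((2 * π) ^ (-(p : ℝ) / 2) * rexp (-(1/2:ℝ) * ‖θ‖^2)) := by
    apply mul_le_mul_of_nonneg_right h1 (by positivity)
  rw [Real.norm_eq_abs, Real.norm_eq_abs]
  rw [abs_of_nonneg (by positivity), abs_of_nonneg (by positivity)]
  calc ‖θ‖ * ((2 * π) ^ (-(p : ℝ) / 2) * rexp (-(1/2:ℝ) * ‖θ‖^2))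
      ≤ rexp (‖θ‖^2/4) * ((2 * π) ^ (-(p : ℝ) / 2) * rexp (-(1/2:ℝ) * ‖θ‖^2)) := h3
    _ = (2 * π) ^ (-(p : ℝ) / 2) * (rexp (‖θ‖^2/4) * rexp (-(1/2:ℝ) * ‖θ‖^2)) := by ring
    _ = (2 * π) ^ (-(p : ℝ) / 2) * rexp (-(1/4:ℝ) * ‖θ‖^2) := by rw [h2]

lemma integrable_gauss_of_le (g : E → ℝ) (hg : Continuous g) (a b : ℝ)
    (hbd : ∀ θ : E, |g θ| ≤ a + b * ‖θ‖) : Integrable g (gaussMeasure (0 : E)) := by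
  apply Integrable.mono ((integrable_const a).add (integrable_norm_gauss.const_mul b))
    hg.aestronglyMeasurable
  refine Filter.Eventually.of_forall fun θ => ?_
  rw [Real.norm_eq_abs]
  exact (hbd θ).trans (le_abs_self _)

end Aux3
lemma sigmoid_eq (s : ℝ) : _root_.sigmoid s = rexp s / (1 + rexp s) := by
  unfold _root_.sigmoid
  rw [Real.exp_neg]
  have h1 : (0:ℝ) < 1 + rexp s := by positivity
  have h2 : rexp s ≠ 0 := (Real.exp_pos s).ne'
  field_simp
  ring

lemma sigmoid_nonneg (s : ℝ) : 0 ≤ _root_.sigmoid s := by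
  unfold _root_.sigmoid; positivity

lemma sigmoid_le_one (s : ℝ) : _root_.sigmoid s ≤ 1 := by
  unfold _root_.sigmoid
  rw [div_le_one (by positivity)]
  nlinarith [Real.exp_pos (-s)]

lemma continuous_sigmoid' : Continuous _root_.sigmoid := by
  unfold _root_.sigmoid
  apply Continuous.div continuous_const (by fun_prop)
  intro s; positivity

lemma hasDerivAt_logistic (y s : ℝ) :
    HasDerivAt (fun s : ℝ => -y * s + Real.log (1 + rexp s)) (_root_.sigmoid s - y) s := by
  have h1 : HasDerivAt (fun s : ℝ => 1 + rexp s) (rexp s) s :=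
    (Real.hasDerivAt_exp s).const_add 1
  have h2 : HasDerivAt (fun s : ℝ => Real.log (1 + rexp s))
      (rexp s / (1 + rexp s)) s := h1.log (by positivity)
  have h3 : HasDerivAt (fun s : ℝ => -y * s) (-y) s := by
    simpa using (hasDerivAt_id s).const_mul (-y)
  have := h3.add h2
  rw [sigmoid_eq]
  exact this.congr_deriv (by ring)

noncomputable def lossFun {p : ℕ} (φv : EuclideanSpace ℝ (Fin p)) (y : ℝ)
    (θ : EuclideanSpace ℝ (Fin p)) : ℝ :=
  -y * (inner ℝ φv θ : ℝ) + Real.log (1 + rexp (inner ℝ φv θ : ℝ))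

section Aux4
variable {p : ℕ}
local notation "E" => EuclideanSpace ℝ (Fin p)

lemma continuous_lossFun (φv : E) (y : ℝ) : Continuous (lossFun φv y) := by
  unfold lossFun
  have hc : Continuous fun θ : E => (inner ℝ φv θ : ℝ) := continuous_const.inner continuous_id
  refine Continuous.add (by fun_prop) ?_
  exact (continuous_const.add (Real.continuous_exp.comp hc)).log (fun θ => by have := Real.exp_pos ((inner ℝ φv θ : ℝ)); simp only [Pi.add_apply, Function.comp_apply]; nlinarith)

lemma abs_lossFun_le (φv : E) (y : ℝ) (θ : E) :
    |lossFun φv y θ| ≤ Real.log 2 + (|y| + 1) * (‖φv‖ * ‖θ‖) := by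
  unfold lossFun
  set s := (inner ℝ φv θ : ℝ) with hs
  have hsb : |s| ≤ ‖φv‖ * ‖θ‖ := by
    rw [hs]; exact abs_real_inner_le_norm φv θ
  have hlogpos : 0 < Real.log (1 + rexp s) := by
    apply Real.log_pos; nlinarith [Real.exp_pos s]
  have hlogle : Real.log (1 + rexp s) ≤ Real.log 2 + |s| := by
    have h1 : 1 + rexp s ≤ 2 * rexp |s| := by
      have e1 : rexp s ≤ rexp |s| := Real.exp_le_exp.2 (le_abs_self s)
      have e2 : (1:ℝ) ≤ rexp |s| := by
        rw [← Real.exp_zero]; exact Real.exp_le_exp.2 (abs_nonneg s)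
      nlinarith
    calc Real.log (1 + rexp s) ≤ Real.log (2 * rexp |s|) :=
          Real.log_le_log (by positivity) h1
      _ = Real.log 2 + |s| := by rw [Real.log_mul (by norm_num) (Real.exp_pos _).ne', Real.log_exp]
  calc |(-y * s + Real.log (1 + rexp s))| ≤ |(-y * s)| + |Real.log (1 + rexp s)| :=
        abs_add_le _ _
    _ = |y| * |s| + |Real.log (1 + rexp s)| := by rw [abs_mul, abs_neg]
    _ ≤ |y| * (‖φv‖ * ‖θ‖) + (Real.log 2 + |s|) := by
        apply add_le_add (mul_le_mul_of_nonneg_left hsb (abs_nonneg y))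
        rw [abs_of_pos hlogpos]; exact hlogle
    _ ≤ Real.log 2 + (|y| + 1) * (‖φv‖ * ‖θ‖) := by nlinarith [hsb, abs_nonneg s, norm_nonneg φv, norm_nonneg θ, abs_nonneg y, (abs_le.1 hsb)]

lemma hasFDerivAt_lossFun (φv : E) (y : ℝ) (x : E) :
    HasFDerivAt (lossFun φv y)
      ((_root_.sigmoid (inner ℝ φv x : ℝ) - y) • innerSL ℝ φv) x := by
  have hlin : HasFDerivAt (fun θ : E => (inner ℝ φv θ : ℝ)) (innerSL ℝ φv) x :=
    (innerSL ℝ φv).hasFDerivAt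
  exact (hasDerivAt_logistic y (inner ℝ φv x : ℝ)).comp_hasFDerivAt x hlin

end Aux4
section Aux5
variable {p : ℕ}
local notation "E" => EuclideanSpace ℝ (Fin p)

lemma abs_sigmoid_sub_le (y s : ℝ) : |_root_.sigmoid s - y| ≤ 1 + |y| := by
  have h1 := _root_.sigmoid_nonneg s
  have h2 := _root_.sigmoid_le_one s
  rw [abs_sub_le_iff]
  constructor <;> cases abs_cases y <;> linarith

set_option maxHeartbeats 1000000 in
set_option synthInstance.maxHeartbeats 200000 in
lemma hasFDerivAt_integral_loss (φv : E) (y : ℝ) (θt : E) :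
    HasFDerivAt (fun m : E => ∫ θ, lossFun φv y θ ∂(gaussMeasure m))
      ((∫ θ, (_root_.sigmoid (inner ℝ φv θ : ℝ) - y) ∂(gaussMeasure θt)) • innerSL ℝ φv) θt := by
  have hrw : (fun m : E => ∫ θ, lossFun φv y θ ∂(gaussMeasure m))
      = fun m : E => ∫ θ, lossFun φv y (θ + m) ∂(gaussMeasure (0:E)) := by
    funext m; exact integral_gaussMeasure_shift m _
  rw [hrw]
  have key := hasFDerivAt_integral_of_dominated_of_fderiv_le
    (𝕜 := ℝ)
    (F := fun (x : E) (θ : E) => lossFun φv y (θ + x))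
    (F' := fun (x : E) (θ : E) => (_root_.sigmoid (inner ℝ φv (θ + x) : ℝ) - y) • innerSL ℝ φv)
    (μ := gaussMeasure (0:E)) (x₀ := θt)
    (bound := fun _ => (1 + |y|) * ‖φv‖) (Metric.ball_mem_nhds θt one_pos)
    (Filter.Eventually.of_forall fun x =>
      ((continuous_lossFun φv y).comp (continuous_id.add continuous_const)).aestronglyMeasurable)
    (by
      apply integrable_gauss_of_le _
        ((continuous_lossFun φv y).comp (continuous_id.add continuous_const))
        (Real.log 2 + (|y| + 1) * (‖φv‖ * ‖θt‖)) ((|y| + 1) * ‖φv‖)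
      intro θ
      have h := abs_lossFun_le φv y (θ + θt)
      have hn : ‖θ + θt‖ ≤ ‖θ‖ + ‖θt‖ := norm_add_le θ θt
      have hy : (0:ℝ) ≤ |y| + 1 := by positivity
      have hφ : (0:ℝ) ≤ ‖φv‖ := norm_nonneg φv
      calc |lossFun φv y (θ + θt)| ≤ Real.log 2 + (|y| + 1) * (‖φv‖ * ‖θ + θt‖) := h
        _ ≤ Real.log 2 + (|y| + 1) * (‖φv‖ * ‖θt‖) + (|y| + 1) * ‖φv‖ * ‖θ‖ := by
            have h3 := mul_le_mul_of_nonneg_left hn hφ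
            nlinarith [mul_le_mul_of_nonneg_left h3 hy])
    (((continuous_sigmoid'.comp
        (continuous_const.inner (continuous_id.add continuous_const))).sub
        continuous_const).smul continuous_const).aestronglyMeasurable
    (Filter.Eventually.of_forall fun θ => by
      intro x hx
      show ‖(_root_.sigmoid (inner ℝ φv (θ + x) : ℝ) - y) • innerSL ℝ φv‖ ≤ (1 + |y|) * ‖φv‖
      have hns : ‖(_root_.sigmoid (inner ℝ φv (θ + x) : ℝ) - y) • innerSL ℝ φv‖
          = |_root_.sigmoid (inner ℝ φv (θ + x) : ℝ) - y| * ‖innerSL ℝ φv‖ := by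
        exact norm_smul (_root_.sigmoid (inner ℝ φv (θ + x) : ℝ) - y) (innerSL ℝ φv)
      rw [hns, innerSL_apply_norm]
      exact mul_le_mul_of_nonneg_right (abs_sigmoid_sub_le y _) (norm_nonneg φv))
    (integrable_const _)
    (Filter.Eventually.of_forall fun θ => by
      intro x hx
      have h := (hasFDerivAt_lossFun φv y (θ + x)).comp x ((hasFDerivAt_id x).const_add θ)
      simpa [Function.comp_def] using h)
  rw [integral_smul_const] at key
  rw [integral_gaussMeasure_shift θt (fun θ => _root_.sigmoid (inner ℝ φv θ : ℝ) - y)]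
  exact key

lemma klGauss_eq (m : E) : klGauss m = ‖m‖^2 / 2 := by
  have hlog : ∀ θ : E, Real.log (gaussDensity m θ / gaussDensity 0 θ)
      = (inner ℝ θ m : ℝ) - ‖m‖^2/2 := by
    intro θ
    unfold gaussDensity
    rw [sub_zero, mul_div_mul_left _ _ (ne_of_gt (by positivity)), ← Real.exp_sub, Real.log_exp]
    have h : ‖θ - m‖^2 = ‖θ‖^2 - 2*(inner ℝ θ m : ℝ) + ‖m‖^2 := by
      rw [@norm_sub_sq_real]
    rw [h]; ring
  unfold klGauss
  simp_rw [hlog]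
  rw [integral_gaussMeasure_shift]
  have h1 : Integrable (fun θ : E => (inner ℝ θ m : ℝ)) (gaussMeasure (0:E)) := by
    apply integrable_gauss_of_le _ (continuous_id.inner continuous_const) 0 ‖m‖
    intro θ
    have := abs_real_inner_le_norm θ m
    simpa [mul_comm] using this
  have hsplit : (fun θ : E => (inner ℝ (θ + m) m : ℝ) - ‖m‖^2/2)
      = fun θ : E => (inner ℝ θ m : ℝ) + ((inner ℝ m m : ℝ) - ‖m‖^2/2) := by
    funext θ; rw [inner_add_left]; ring
  rw [hsplit, integral_add h1 (integrable_const _), integral_const]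
  have hzero : ∫ θ, (inner ℝ θ m : ℝ) ∂(gaussMeasure (0:E)) = 0 := by
    rw [integral_gaussMeasure]
    have hneg : ∀ θ : E, gaussDensity 0 (-θ) * (inner ℝ (-θ) m : ℝ)
        = -(gaussDensity 0 θ * (inner ℝ θ m : ℝ)) := by
      intro θ
      have : gaussDensity 0 (-θ) = gaussDensity 0 θ := by simp [gaussDensity]
      rw [this, inner_neg_left]; ring
    have h := integral_neg_eq_self (fun θ : E => gaussDensity 0 θ * (inner ℝ θ m : ℝ)) volume
    simp_rw [hneg, integral_neg] at h
    linarith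
  rw [hzero, real_inner_self_eq_norm_sq]
  simp
  try ring

lemma hasFDerivAt_half_norm_sq (x : E) :
    HasFDerivAt (fun m : E => ‖m‖^2/2) (innerSL ℝ x) x := by
  have h := (hasStrictFDerivAt_norm_sq x).hasFDerivAt
  have h2 := h.const_mul (1/2 : ℝ)
  have hfun : (fun m : E => (1/2 : ℝ) * ‖m‖^2) = fun m : E => ‖m‖^2/2 := by
    funext m; ring
  rw [hfun] at h2
  refine h2.congr_fderiv ?_
  ext w
  simp
  try ring

end Aux5

section Main
variable {p : ℕ}
local notation "E" => EuclideanSpace ℝ (Fin p)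

lemma toDual_innerSL (v : E) :
    (InnerProductSpace.toDual ℝ (EuclideanSpace ℝ (Fin p)) v : E →L[ℝ] ℝ) = innerSL ℝ v := by
  ext w
  simp [InnerProductSpace.toDual_apply_apply]

end Main

/-- One step of gradient descent on the variational objective
`L(m) = ∑ᵢ E_{N(m,I)}[ℓᵢ(θ)] + KL(N(m,I)‖N(0,I))` for logistic regression equals one
step of gradient descent on the regularized empirical risk with each label `yᵢ`
replaced by the noisy label `yᵢ + εᵢ`, where
`εᵢ = σ(φᵢᵀθ_t) - E_{N(θ_t,I)}[σ(φᵢᵀθ)]`. -/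
theorem stmt11 {p N : ℕ} (φ : Fin N → EuclideanSpace ℝ (Fin p))
    (y : Fin N → ℝ) (hy : ∀ i, y i = 0 ∨ y i = 1)
    (θt : EuclideanSpace ℝ (Fin p)) (ρ : ℝ) (hρ : 0 < ρ)
    (L : EuclideanSpace ℝ (Fin p) → ℝ)
    (hL : L = fun m =>
      (∑ i, ∫ θ, (-(y i) * (inner ℝ (φ i) θ : ℝ)
          + Real.log (1 + Real.exp (inner ℝ (φ i) θ : ℝ))) ∂(gaussMeasure m))
        + klGauss m)
    (ε : Fin N → ℝ)
    (hε : ∀ i, ε i = _root_.sigmoid (inner ℝ (φ i) θt : ℝ)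
        - ∫ θ, _root_.sigmoid (inner ℝ (φ i) θ : ℝ) ∂(gaussMeasure θt)) :
    θt - ρ • gradient L θt
      = (1 - ρ) • θt
        - ρ • ∑ i, (_root_.sigmoid (inner ℝ (φ i) θt : ℝ) - (y i + ε i)) • φ i := by
  set c : Fin N → ℝ :=
    fun i => ∫ θ, (_root_.sigmoid (inner ℝ (φ i) θ : ℝ) - y i) ∂(gaussMeasure θt) with hc_def
  -- KL part
  have hklfun : (klGauss : EuclideanSpace ℝ (Fin p) → ℝ) = fun m => ‖m‖^2/2 :=
    funext klGauss_eq
  have hkl : HasFDerivAt (klGauss : EuclideanSpace ℝ (Fin p) → ℝ) (innerSL ℝ θt) θt := by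
    rw [hklfun]; exact hasFDerivAt_half_norm_sq θt
  -- total derivative
  have hD : HasFDerivAt L ((∑ i, c i • innerSL ℝ (φ i)) + innerSL ℝ θt) θt := by
    rw [hL]
    refine HasFDerivAt.add (HasFDerivAt.fun_sum fun i _ => ?_) hkl
    have h := hasFDerivAt_integral_loss (φ i) (y i) θt
    simpa [lossFun] using h
  have hgrad : HasGradientAt L ((∑ i, c i • φ i) + θt) θt := by
    rw [hasGradientAt_iff_hasFDerivAt]
    have htd : (InnerProductSpace.toDual ℝ (EuclideanSpace ℝ (Fin p)))
        ((∑ i, c i • φ i) + θt)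
        = (∑ i, c i • innerSL ℝ (φ i)) + innerSL ℝ θt := by
      rw [map_add, map_sum, toDual_innerSL]
      congr 1
      refine Finset.sum_congr rfl fun i _ => ?_
      rw [_root_.map_smul, toDual_innerSL]
    rw [htd]
    exact hD
  have hgradeq : gradient L θt = (∑ i, c i • φ i) + θt := hgrad.gradient
  -- identify c i
  have hc : ∀ i, _root_.sigmoid (inner ℝ (φ i) θt : ℝ) - (y i + ε i) = c i := by
    intro i
    have hσint : Integrable (fun θ => _root_.sigmoid (inner ℝ (φ i) (θ + θt) : ℝ))
        (gaussMeasure (0 : EuclideanSpace ℝ (Fin p))) := by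
      apply integrable_gauss_of_le _
        (continuous_sigmoid'.comp (continuous_const.inner (continuous_id.add continuous_const)))
        1 0
      intro θ
      show |_root_.sigmoid (inner ℝ (φ i) (θ + θt) : ℝ)| ≤ 1 + 0 * ‖θ‖
      rw [abs_of_nonneg (_root_.sigmoid_nonneg _)]
      simpa using _root_.sigmoid_le_one _
    have h1 : c i = ∫ θ, (_root_.sigmoid (inner ℝ (φ i) (θ + θt) : ℝ) - y i)
        ∂(gaussMeasure (0 : EuclideanSpace ℝ (Fin p))) := by
      rw [hc_def]
      exact integral_gaussMeasure_shift θt _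
    have h2 : (∫ θ, _root_.sigmoid (inner ℝ (φ i) θ : ℝ) ∂(gaussMeasure θt))
        = ∫ θ, _root_.sigmoid (inner ℝ (φ i) (θ + θt) : ℝ)
            ∂(gaussMeasure (0 : EuclideanSpace ℝ (Fin p))) :=
      integral_gaussMeasure_shift θt _
    rw [h1, integral_sub hσint (integrable_const _), integral_const, probReal_univ,
      one_smul, hε i, h2]
    ring
  simp_rw [hc, hgradeq]
  rw [smul_add, sub_smul, one_smul]
  abel
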